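/- Let q, α be complex numbers with |q| < 1 such that no factor 1 + α q^{m+1} (m ≥ 0) vanishes. Then Σ_{n=0}^∞ α^n q^{n(n+1)/2} / (−αq; q)_{n+1} = 1. -/

import Mathlib

open scoped BigOperators

/-- The finite q-Pochhammer symbol `(a; q)_n = ∏_{m=0}^{n-1} (1 - a q^m)`. -/
noncomputable def qPoch (a q : ℂ) (n : ℕ) : ℂ := ∏ m ∈ Finset.range n, (1 - a * q ^ m)

/-- The infinite q-Pochhammer symbol `(a; q)_∞ = ∏_{m=0}^{∞} (1 - a q^m)`. -/
noncomputable def qPochInf (a q : ℂ) : ℂ := ∏' m : ℕ, (1 - a * q ^ m)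

/-!
The series telescopes: with `b n = αⁿ q^(n(n+1)/2) / (-αq; q)_n`, the `n`-th summand is
`b n - b (n+1)`, so the sum is `b 0 = 1` as soon as `b` is summable. Summability follows from
the ratio test, since `b (n+1) / b n = α q^(n+1) / (1 + α q^(n+1)) → 0`.
-/

open Filter Topology

theorem summable_of_eq_mul_of_tendsto_zero {R : Type*} [SeminormedRing R] [CompleteSpace R]
    {f r : ℕ → R} (hf : ∀ n, f (n + 1) = f n * r n) (hr : Tendsto r atTop (𝓝 0)) :
    Summable f := by
  refine summable_of_ratio_norm_eventually_le (r := 1 / 2) (by norm_num) ?_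
  filter_upwards [hr.norm.eventually_le_const (u := 1 / 2) (by norm_num)] with n hn
  rw [hf, mul_comm (1 / 2 : ℝ)]
  calc ‖f n * r n‖ ≤ ‖f n‖ * ‖r n‖ := norm_mul_le _ _
    _ ≤ ‖f n‖ * (1 / 2) := by gcongr

theorem hasSum_sub_succ {G : Type*} [AddCommGroup G] [TopologicalSpace G]
    [IsTopologicalAddGroup G] {f : ℕ → G} (hf : Summable f) :
    HasSum (fun n => f n - f (n + 1)) (f 0) := by
  have hshift : HasSum (fun n => f (n + 1)) (∑' n, f n - f 0) := by
    simpa using (hasSum_nat_add_iff' 1).mpr hf.hasSum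
  simpa using hf.hasSum.sub hshift

theorem qPoch_succ (a q : ℂ) (n : ℕ) : qPoch a q (n + 1) = qPoch a q n * (1 - a * q ^ n) :=
  Finset.prod_range_succ _ _

theorem qPoch_neg_mul_succ (α q : ℂ) (n : ℕ) :
    qPoch (-α * q) q (n + 1) = qPoch (-α * q) q n * (1 + α * q ^ (n + 1)) := by
  rw [qPoch_succ]
  ring

theorem qPoch_neg_mul_ne_zero {α q : ℂ} (h : ∀ m : ℕ, 1 + α * q ^ (m + 1) ≠ 0) (n : ℕ) :
    qPoch (-α * q) q n ≠ 0 := by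
  induction n with
  | zero => simp [qPoch]
  | succ n ih => rw [qPoch_neg_mul_succ]; exact mul_ne_zero ih (h n)

theorem succ_mul_succ_add_one_div_two (n : ℕ) :
    (n + 1) * (n + 1 + 1) / 2 = n * (n + 1) / 2 + (n + 1) := by
  rw [show (n + 1) * (n + 1 + 1) = n * (n + 1) + (n + 1) * 2 by ring,
    Nat.add_mul_div_right _ _ two_pos]

noncomputable def kangTail (α q : ℂ) (n : ℕ) : ℂ :=
  α ^ n * q ^ (n * (n + 1) / 2) / qPoch (-α * q) q n

theorem kangTail_zero (α q : ℂ) : kangTail α q 0 = 1 := by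
  simp [kangTail, qPoch]

theorem kangTail_succ (α q : ℂ) (n : ℕ) :
    kangTail α q (n + 1) = kangTail α q n * (α * q ^ (n + 1) / (1 + α * q ^ (n + 1))) := by
  rw [kangTail, kangTail, succ_mul_succ_add_one_div_two, qPoch_neg_mul_succ]
  simp only [div_eq_mul_inv, mul_inv]
  ring

theorem kangTail_sub_succ {α q : ℂ} (h : ∀ m : ℕ, 1 + α * q ^ (m + 1) ≠ 0) (n : ℕ) :
    kangTail α q n - kangTail α q (n + 1) =
      α ^ n * q ^ (n * (n + 1) / 2) / qPoch (-α * q) q (n + 1) := by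
  rw [kangTail_succ, qPoch_neg_mul_succ, kangTail]
  field_simp [h n]
  ring

theorem tendsto_kangTail_ratio {α q : ℂ} (hq : ‖q‖ < 1) :
    Tendsto (fun n : ℕ => α * q ^ (n + 1) / (1 + α * q ^ (n + 1))) atTop (𝓝 0) := by
  have hpow : Tendsto (fun n : ℕ => α * q ^ (n + 1)) atTop (𝓝 0) := by
    simpa using ((tendsto_pow_atTop_nhds_zero_of_norm_lt_one hq).comp
      (tendsto_add_atTop_nat 1)).const_mul α
  have hratio := hpow.div (hpow.const_add 1) (by simp)
  rwa [add_zero, zero_div] at hratio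

theorem kang_corollary_74 (q α : ℂ) (hq : ‖q‖ < 1)
    (h : ∀ m : ℕ, 1 + α * q ^ (m + 1) ≠ 0) :
    (∑' n : ℕ, α ^ n * q ^ (n * (n + 1) / 2) / qPoch (-α * q) q (n + 1)) = 1 := by
  have hb : Summable (kangTail α q) :=
    summable_of_eq_mul_of_tendsto_zero (kangTail_succ α q) (tendsto_kangTail_ratio hq)
  simpa only [kangTail_sub_succ h, kangTail_zero] using (hasSum_sub_succ hb).tsum_eq
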